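/- Let n ≥ 1 and let Fₙ : ℝⁿ → ℝ^{n+1} be the chart map of the cubic model of Sⁿ, defined by Fₙ(x) = (1, x)/√(1 + ‖x‖₂²). Then the set { ‖DFₙ(x)(v)‖₂ / ‖v‖₂ : x ∈ ℝⁿ with ‖x‖_∞ ≤ 1, v ∈ ℝⁿ, v ≠ 0 } equals the closed interval [1/(n+1), 1]; that is, the metric distortion range of μₙ is [1/(n+1), 1]. -/

import Mathlib

open RealInnerProductSpace

/-- The sup norm of a point of Euclidean space (the `ℓ^∞` norm). -/
noncomputable def supNorm {m : ℕ} (q : EuclideanSpace ℝ (Fin m)) : ℝ :=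
  ‖(EuclideanSpace.equiv (Fin m) ℝ) q‖

/-- The chart map `Fₙ : ℝⁿ → ℝ^{n+1}` of the cubic model of `Sⁿ`:
`Fₙ(x) = (1, x) / √(1 + ‖x‖₂²)`. -/
noncomputable def chartMapN (n : ℕ) (x : EuclideanSpace ℝ (Fin n)) :
    EuclideanSpace ℝ (Fin (n + 1)) :=
  (Real.sqrt (1 + ‖x‖ ^ 2))⁻¹ •
    (EuclideanSpace.equiv (Fin (n + 1)) ℝ).symm
      (Fin.cons 1 ((EuclideanSpace.equiv (Fin n) ℝ) x))

/-! ### Auxiliary constructions -/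

/-- The linear isometry `x ↦ (0, x)` from `ℝⁿ` to `ℝ^{n+1}`, as a continuous linear map. -/
noncomputable def consCLM (n : ℕ) :
    EuclideanSpace ℝ (Fin n) →L[ℝ] EuclideanSpace ℝ (Fin (n + 1)) :=
  LinearMap.toContinuousLinearMap
  { toFun := fun x => (EuclideanSpace.equiv (Fin (n + 1)) ℝ).symm
      (Fin.cons 0 ((EuclideanSpace.equiv (Fin n) ℝ) x))
    map_add' := by
      intro x y
      apply (EuclideanSpace.equiv (Fin (n+1)) ℝ).injective
      funext i
      refine Fin.cases ?_ (fun j => ?_) i <;> simp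
    map_smul' := by
      intro c x
      apply (EuclideanSpace.equiv (Fin (n+1)) ℝ).injective
      funext i
      refine Fin.cases ?_ (fun j => ?_) i <;> simp }

lemma consCLM_apply_zero (n : ℕ) (x : EuclideanSpace ℝ (Fin n)) :
    consCLM n x 0 = 0 := rfl

lemma consCLM_apply_succ (n : ℕ) (x : EuclideanSpace ℝ (Fin n)) (j : Fin n) :
    consCLM n x j.succ = x j := rfl

/-- The first standard basis vector of `ℝ^{n+1}`. -/
noncomputable def e0 (n : ℕ) : EuclideanSpace ℝ (Fin (n + 1)) :=
  EuclideanSpace.single 0 1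

lemma e0_apply_zero (n : ℕ) : e0 n 0 = 1 := by simp [e0]

lemma e0_apply_succ (n : ℕ) (j : Fin n) : e0 n j.succ = 0 := by
  simp [e0, EuclideanSpace.single_apply, Fin.succ_ne_zero]

lemma decomp (n : ℕ) (x : EuclideanSpace ℝ (Fin n)) :
    (EuclideanSpace.equiv (Fin (n + 1)) ℝ).symm
      (Fin.cons 1 ((EuclideanSpace.equiv (Fin n) ℝ) x)) = e0 n + consCLM n x := by
  apply (EuclideanSpace.equiv (Fin (n+1)) ℝ).injective
  funext i
  show (Fin.cons 1 ((EuclideanSpace.equiv (Fin n) ℝ) x) : Fin (n+1) → ℝ) i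
      = (e0 n + consCLM n x) i
  rw [PiLp.add_apply]
  refine Fin.cases ?_ (fun j => ?_) i
  · simp [e0, consCLM_apply_zero]
  · simp [e0, consCLM_apply_succ, Fin.succ_ne_zero, EuclideanSpace.single_apply]

lemma inner_cons_cons (n : ℕ) (x y : EuclideanSpace ℝ (Fin n)) :
    ⟪consCLM n x, consCLM n y⟫ = ⟪x, y⟫ := by
  simp only [PiLp.inner_apply, RCLike.inner_apply, conj_trivial]
  rw [Fin.sum_univ_succ]
  simp [consCLM_apply_zero, consCLM_apply_succ]

lemma inner_e0_cons (n : ℕ) (y : EuclideanSpace ℝ (Fin n)) :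
    ⟪e0 n, consCLM n y⟫ = 0 := by
  simp only [PiLp.inner_apply, RCLike.inner_apply, conj_trivial]
  rw [Fin.sum_univ_succ]
  simp [consCLM_apply_zero, consCLM_apply_succ, e0_apply_succ]

lemma inner_e0_e0 (n : ℕ) : ⟪e0 n, e0 n⟫ = 1 := by
  simp only [PiLp.inner_apply, RCLike.inner_apply, conj_trivial]
  rw [Fin.sum_univ_succ]
  simp [e0_apply_zero, e0_apply_succ]

lemma norm_sq_coords (m : ℕ) (y : EuclideanSpace ℝ (Fin m)) : ‖y‖^2 = ∑ i, y i ^ 2 := by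
  rw [← real_inner_self_eq_norm_sq]
  simp only [PiLp.inner_apply, RCLike.inner_apply, conj_trivial, sq]

/-! ### The derivative of the chart map -/

lemma fderiv_chartMapN_apply (n : ℕ) (x v : EuclideanSpace ℝ (Fin n)) :
    fderiv ℝ (chartMapN n) x v =
      (Real.sqrt (1 + ‖x‖ ^ 2))⁻¹ • consCLM n v +
        (-(⟪x, v⟫) / (Real.sqrt (1 + ‖x‖ ^ 2)) ^ 3) • (e0 n + consCLM n x) := by
  have ht : (0:ℝ) < 1 + ‖x‖ ^ 2 := by positivity
  have hs : (0:ℝ) < Real.sqrt (1 + ‖x‖ ^ 2) := Real.sqrt_pos.mpr ht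
  set s := Real.sqrt (1 + ‖x‖ ^ 2) with hsdef
  set Dq : EuclideanSpace ℝ (Fin n) →L[ℝ] ℝ :=
    (fderivInnerCLM ℝ (x, x)).comp
      ((ContinuousLinearMap.id ℝ _).prod (ContinuousLinearMap.id ℝ _)) with hDq
  have hinner : HasFDerivAt (fun y : EuclideanSpace ℝ (Fin n) => ⟪y, y⟫) Dq x :=
    (hasFDerivAt_id x).inner ℝ (hasFDerivAt_id x)
  have hq : HasFDerivAt (fun y : EuclideanSpace ℝ (Fin n) => 1 + ‖y‖ ^ 2) Dq x := by
    have : (fun y : EuclideanSpace ℝ (Fin n) => 1 + ‖y‖ ^ 2)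
        = fun y => (⟪y, y⟫ : ℝ) + 1 := by
      funext y; rw [real_inner_self_eq_norm_sq]; ring
    rw [this]
    exact hinner.add_const 1
  set d : ℝ := -(1 / (2 * s)) / s ^ 2 with hd
  have hφ : HasDerivAt (fun t : ℝ => (Real.sqrt t)⁻¹) d (1 + ‖x‖ ^ 2) :=
    (Real.hasDerivAt_sqrt ht.ne').inv hs.ne'
  have hg : HasFDerivAt (fun y : EuclideanSpace ℝ (Fin n) => (Real.sqrt (1 + ‖y‖ ^ 2))⁻¹)
      (d • Dq) x := by have := hφ.comp_hasFDerivAt x hq; exact this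
  have hL : HasFDerivAt (fun y : EuclideanSpace ℝ (Fin n) => e0 n + consCLM n y)
      (consCLM n) x := ((consCLM n).hasFDerivAt).const_add (e0 n)
  have hF : HasFDerivAt (chartMapN n)
      (s⁻¹ • consCLM n + (d • Dq).smulRight (e0 n + consCLM n x)) x := by
    have := hg.smul hL
    convert this using 2 <;> try rfl
    · funext y
      rw [chartMapN, decomp]; rfl
  rw [hF.fderiv]
  have hDqv : Dq v = 2 * ⟪x, v⟫ := by
    simp only [hDq, ContinuousLinearMap.comp_apply, ContinuousLinearMap.prod_apply,
      ContinuousLinearMap.coe_id', id_eq, fderivInnerCLM_apply]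
    rw [real_inner_comm v x]; ring
  simp only [ContinuousLinearMap.add_apply, ContinuousLinearMap.smul_apply,
    ContinuousLinearMap.smulRight_apply, hDqv]
  congr 1
  congr 1
  rw [hd]
  field_simp
  ring_nf; rw [mul_comm (s^3), mul_assoc, ← mul_pow, mul_inv_cancel₀ hs.ne', one_pow, mul_one]

lemma norm_sq_fderiv_chartMapN (n : ℕ) (x v : EuclideanSpace ℝ (Fin n)) :
    ‖fderiv ℝ (chartMapN n) x v‖ ^ 2
      = ‖v‖ ^ 2 / (1 + ‖x‖ ^ 2) - ⟪x, v⟫ ^ 2 / (1 + ‖x‖ ^ 2) ^ 2 := by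
  rw [fderiv_chartMapN_apply]
  set w : EuclideanSpace ℝ (Fin (n+1)) := e0 n + consCLM n x with hwdef
  set u : EuclideanSpace ℝ (Fin (n+1)) := consCLM n v with hudef
  have hce0 : ∀ y : EuclideanSpace ℝ (Fin n), ⟪consCLM n y, e0 n⟫ = (0:ℝ) := by
    intro y; rw [real_inner_comm]; exact inner_e0_cons n y
  have hw : ⟪w, w⟫ = 1 + ‖x‖ ^ 2 := by
    simp only [hwdef, inner_add_left, inner_add_right, inner_e0_e0, inner_e0_cons,
      inner_cons_cons, hce0]
    rw [real_inner_self_eq_norm_sq]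
    ring
  have huw : ⟪u, w⟫ = ⟪v, x⟫ := by
    simp only [hudef, hwdef, inner_add_right, inner_cons_cons, hce0]
    ring
  have hu : ⟪u, u⟫ = ‖v‖ ^ 2 := by
    rw [hudef, inner_cons_cons, real_inner_self_eq_norm_sq]
  have ht : (0:ℝ) < 1 + ‖x‖ ^ 2 := by positivity
  have hs : (0:ℝ) < Real.sqrt (1 + ‖x‖ ^ 2) := Real.sqrt_pos.mpr ht
  set s := Real.sqrt (1 + ‖x‖ ^ 2) with hsdef
  have hs2 : s ^ 2 = 1 + ‖x‖ ^ 2 := Real.sq_sqrt ht.le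
  have hwu : ⟪w, u⟫ = ⟪v, x⟫ := by rw [real_inner_comm]; exact huw
  rw [← real_inner_self_eq_norm_sq]
  simp only [inner_add_left, inner_add_right, real_inner_smul_left, real_inner_smul_right,
    hw, hu, huw, hwu]
  rw [real_inner_comm v x, ← hs2]
  field_simp
  ring

/-- Pure real-number arithmetic for the distortion bounds. -/
lemma ratio_bounds (nR A W P D : ℝ) (hn1 : 1 ≤ nR) (hA1 : 1 ≤ A) (hAn : A ≤ nR + 1)
    (hW : 0 < W) (hP : 0 ≤ P) (hCS : P ≤ (A - 1) * W ^ 2) (hD0 : 0 ≤ D)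
    (hDsq : D ^ 2 = W ^ 2 / A - P / A ^ 2) :
    1 / (nR + 1) ≤ D / W ∧ D / W ≤ 1 := by
  have hA0 : (0:ℝ) < A := by linarith
  have hkey : D ^ 2 * A ^ 2 = W ^ 2 * A - P := by
    rw [hDsq]; field_simp
  constructor
  · have hsq : (1 / (nR + 1)) ^ 2 ≤ (D / W) ^ 2 := by
      rw [div_pow, div_pow, one_pow, div_le_div_iff₀ (by positivity) (by positivity)]
      nlinarith [mul_nonneg (sq_nonneg D) (mul_nonneg (sub_nonneg.mpr hAn)
        (by linarith : (0:ℝ) ≤ A + nR + 1)), sq_nonneg D]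
    have h1 : (0:ℝ) ≤ 1 / (nR + 1) := by positivity
    have h2 : (0:ℝ) ≤ D / W := by positivity
    have := Real.sqrt_le_sqrt hsq
    rwa [Real.sqrt_sq h1, Real.sqrt_sq h2] at this
  · have hPA : 0 ≤ P / A ^ 2 := by positivity
    have hVA : W ^ 2 / A ≤ W ^ 2 := by
      rw [div_le_iff₀ hA0]; nlinarith
    have hle : D ^ 2 ≤ W ^ 2 := by rw [hDsq]; linarith
    have h2 : (0:ℝ) ≤ D / W := by positivity
    have hsq : (D / W) ^ 2 ≤ 1 := by
      rw [div_pow, div_le_one (by positivity)]; exact hle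
    nlinarith [sq_nonneg (D / W - 1)]

/-! ### Main theorem -/

/-- For `n ≥ 1`, the set of ratios `‖DFₙ(x)(v)‖₂ / ‖v‖₂` over points `x` of
the cube `[-1,1]ⁿ` and nonzero tangent vectors `v` equals the closed interval `[1/(n+1), 1]`;
that is, the metric distortion range of `μₙ` is `[1/(n+1), 1]`. -/
theorem chartMapN_metric_distortion_range (n : ℕ) (hn : 1 ≤ n) :
    {r : ℝ | ∃ x v : EuclideanSpace ℝ (Fin n),
        supNorm x ≤ 1 ∧ v ≠ 0 ∧ r = ‖fderiv ℝ (chartMapN n) x v‖ / ‖v‖} =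
      Set.Icc (1 / (n + 1) : ℝ) 1 := by
  have hn1 : (1:ℝ) ≤ (n:ℝ) := by exact_mod_cast hn
  have hnpos : (0:ℝ) < (n:ℝ) := by linarith
  have hn1pos : (0:ℝ) < (n:ℝ) + 1 := by linarith
  ext r
  simp only [Set.mem_setOf_eq, Set.mem_Icc]
  constructor
  · rintro ⟨x, v, hx, hv, rfl⟩
    have hvpos : 0 < ‖v‖ := norm_pos_iff.mpr hv
    have hA1 : (1:ℝ) ≤ 1 + ‖x‖ ^ 2 := by nlinarith [sq_nonneg ‖x‖]
    have hxn : ‖x‖ ^ 2 ≤ (n:ℝ) := by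
      rw [norm_sq_coords]
      calc (∑ i, x i ^ 2) ≤ ∑ _i : Fin n, (1:ℝ) := by
            apply Finset.sum_le_sum
            intro i _
            have h1 : |x i| ≤ supNorm x := by
              have := norm_le_pi_norm ((EuclideanSpace.equiv (Fin n) ℝ) x) i
              simpa [supNorm, Real.norm_eq_abs] using this
            have h2 : |x i| ≤ 1 := le_trans h1 hx
            nlinarith [abs_nonneg (x i), sq_abs (x i)]
        _ = (n:ℝ) := by simp
    have hCS : ⟪x, v⟫ ^ 2 ≤ ((1 + ‖x‖ ^ 2) - 1) * ‖v‖ ^ 2 := by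
      have h := abs_real_inner_le_norm x v
      nlinarith [abs_nonneg (⟪x, v⟫ : ℝ), sq_abs (⟪x, v⟫ : ℝ), norm_nonneg x, norm_nonneg v]
    have h := ratio_bounds (n : ℝ) (1 + ‖x‖ ^ 2) ‖v‖ (⟪x, v⟫ ^ 2)
      ‖fderiv ℝ (chartMapN n) x v‖ hn1 hA1 (by linarith) hvpos (sq_nonneg _) hCS
      (norm_nonneg _) (norm_sq_fderiv_chartMapN n x v)
    exact h
  · rintro ⟨hr1, hr2⟩
    have hrpos : 0 < r := lt_of_lt_of_le (by positivity) hr1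
    -- λ parameter
    set lam : ℝ := Real.sqrt ((1 - r) / ((n:ℝ) * r)) with hlam
    have hquot : 0 ≤ (1 - r) / ((n:ℝ) * r) := by
      apply div_nonneg (by linarith) (by positivity)
    have hlamsq : lam ^ 2 = (1 - r) / ((n:ℝ) * r) := Real.sq_sqrt hquot
    have hlam0 : 0 ≤ lam := Real.sqrt_nonneg _
    have hlamsq_le : (n:ℝ) * lam ^ 2 = (1 - r) / r := by
      rw [hlamsq]; field_simp
    -- the point and tangent vector
    set x : EuclideanSpace ℝ (Fin n) :=
      (EuclideanSpace.equiv (Fin n) ℝ).symm (fun _ => lam) with hxdef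
    set v : EuclideanSpace ℝ (Fin n) :=
      (EuclideanSpace.equiv (Fin n) ℝ).symm (fun _ => (1:ℝ)) with hvdef
    haveI : Nonempty (Fin n) := ⟨⟨0, hn⟩⟩
    have hxi : ∀ i, x i = lam := fun i => rfl
    have hvi : ∀ i, v i = 1 := fun i => rfl
    have hlam_le : lam ≤ 1 := by
      rw [hlam]
      have hle1 : (1 - r) / ((n:ℝ) * r) ≤ 1 := by
        rw [div_le_one (by positivity)]
        have h1r : 1 ≤ r * ((n:ℝ) + 1) := by rwa [div_le_iff₀ hn1pos] at hr1
        linarith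
      have := Real.sqrt_le_sqrt hle1
      rwa [Real.sqrt_one] at this
    refine ⟨x, v, ?_, ?_, ?_⟩
    · -- supNorm x ≤ 1
      have : supNorm x = |lam| := by
        rw [supNorm, hxdef, ContinuousLinearEquiv.apply_symm_apply]
        simp [pi_norm_const, Real.norm_eq_abs]
      rw [this, abs_of_nonneg hlam0]
      exact hlam_le
    · -- v ≠ 0
      intro h
      have : v ⟨0, hn⟩ = 0 := by rw [h]; rfl
      rw [hvi] at this
      exact one_ne_zero this
    · -- the ratio equals r
      have hnormv : ‖v‖ ^ 2 = (n:ℝ) := by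
        rw [norm_sq_coords]; simp [hvi]
      have hnormx : ‖x‖ ^ 2 = (n:ℝ) * lam ^ 2 := by
        rw [norm_sq_coords]; simp [hxi]
      have hinner : ⟪x, v⟫ = (n:ℝ) * lam := by
        simp only [PiLp.inner_apply, RCLike.inner_apply, conj_trivial]
        simp [hxi, hvi]
      have hA : 1 + ‖x‖ ^ 2 = 1 / r := by
        rw [hnormx, hlamsq_le]; field_simp; ring
      have hDsq : ‖fderiv ℝ (chartMapN n) x v‖ ^ 2 = (n:ℝ) * r ^ 2 := by
        rw [norm_sq_fderiv_chartMapN, hA, hnormv, hinner]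
        have hh : (n:ℝ) * lam ^ 2 * r = 1 - r := by
          rw [hlamsq_le]; field_simp
        field_simp
        linear_combination (-1:ℝ) * hh
      have hD : ‖fderiv ℝ (chartMapN n) x v‖ = Real.sqrt n * r := by
        have h1 : (Real.sqrt n * r) ^ 2 = (n:ℝ) * r ^ 2 := by
          rw [mul_pow, Real.sq_sqrt hnpos.le]
        have h2 : (0:ℝ) ≤ Real.sqrt n * r := by positivity
        calc ‖fderiv ℝ (chartMapN n) x v‖
            = Real.sqrt (‖fderiv ℝ (chartMapN n) x v‖ ^ 2) :=
              (Real.sqrt_sq (norm_nonneg _)).symm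
          _ = Real.sqrt ((Real.sqrt n * r) ^ 2) := by rw [hDsq, h1]
          _ = Real.sqrt n * r := Real.sqrt_sq h2
      have hnv : ‖v‖ = Real.sqrt n := by
        calc ‖v‖ = Real.sqrt (‖v‖ ^ 2) := (Real.sqrt_sq (norm_nonneg _)).symm
          _ = Real.sqrt n := by rw [hnormv]
      rw [hD, hnv]
      have : Real.sqrt n ≠ 0 := by positivity
      field_simp
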